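/- Assume α > 2 and that w_s and w_g are nonincreasing and continuous on [0, π] with values in [0, 1] and w_s(0)·w_g(0) > 0. Then liminf_{Δ→0⁺} Δ²·η(Δ) > 0; i.e., the aggregate interference scaled by the squared inter-satellite spacing stays bounded away from zero in the high-density limit. -/

import Mathlib

open Real

/-- Distance `‖s_{i,j}‖ = sqrt((iΔ/2)² + 3(jΔ/2)² + h²)` from the origin terminal to
satellite `s_{i,j}` of the regular configuration. -/
noncomputable def snorm (Δ h : ℝ) (i j : ℤ) : ℝ :=
  Real.sqrt ((i * Δ / 2) ^ 2 + 3 * (j * Δ / 2) ^ 2 + h ^ 2)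

/-- Off-axis angle `θ^reg_{i,j}(Δ) = arccos(h/‖s_{i,j}‖)`. -/
noncomputable def θreg (Δ h : ℝ) (i j : ℤ) : ℝ :=
  Real.arccos (h / snorm Δ h i j)

/-- Aggregate interference-to-noise ratio `η(Δ)` of the regular configuration. -/
noncomputable def ηreg (ws wg : ℝ → ℝ) (h α p σ2 : ℝ) (Δ : ℝ) : ℝ :=
  (p / σ2) * ∑' q : ℤ × ℤ,
    if q.1 % 2 = q.2 % 2 ∧ q ≠ (0, 0) then
      snorm Δ h q.1 q.2 ^ (-α) * (ws (θreg Δ h q.1 q.2) * wg (θreg Δ h q.1 q.2))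
    else 0

/-- Spectral efficiency of the regular configuration,
`R^reg(Δ) = (2/(Δ²√3))·log₂(1 + γ/(η(Δ) + 1))` with `γ = (p/σ²)h^{−α}`. -/
noncomputable def Rreg (ws wg : ℝ → ℝ) (h α p σ2 : ℝ) (Δ : ℝ) : ℝ :=
  (2 / (Δ ^ 2 * Real.sqrt 3)) *
    Real.logb 2 (1 + (p / σ2) * h ^ (-α) / (ηreg ws wg h α p σ2 Δ + 1))

/-!
Near the vertical the combined gain `w = w_s·w_g` is at least `w(0)/2` by continuity, hence so is
the gain of every satellite within some horizontal distance `ρ` of the terminal. For small `Δ` that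
disc holds about `(ρ/Δ)²` satellites, each contributing a fixed positive amount, so `Δ²·η(Δ)` is
bounded below. It is also bounded above, without which the `liminf` would be a junk value: with
`x = iΔ/2`, `y = jΔ/2` one has `‖s_{i,j}‖⁴ ≥ (x² + y² + h²)² ≥ (x² + h²)(y² + h²)`, so the lattice
sum is dominated by the square of `∑ₙ ((nΔ/2)² + h²)^(-α/4)`, which is `O(1/Δ)` by comparison
with an integral because `α/2 > 1`.
-/

open Set Filter Topology

lemma integral_rpow_neg_le {p a b : ℝ} (hp : 1 < p) (ha : 0 < a) (hab : a ≤ b) :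
    ∫ x in a..b, x ^ (-p) ≤ a ^ (1 - p) / (p - 1) := by
  have h0 : (0 : ℝ) ∉ uIcc a b := by
    rw [uIcc_of_le hab]; exact fun h ↦ ha.not_ge h.1
  rw [integral_rpow (Or.inr ⟨by linarith, h0⟩), show -p + 1 = 1 - p by ring, ← neg_div_neg_eq,
    neg_sub, neg_sub]
  gcongr
  exact sub_le_self _ (rpow_nonneg (ha.le.trans hab) _)

section LatticeSums

variable {β a : ℝ}

lemma rpow_sq_add_sq_le_rpow_sq (hβ : 0 ≤ β) (x : ℝ) (ha : 0 < a) :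
    (x ^ 2 + a ^ 2) ^ (-β) ≤ a ^ (-(2 * β)) := by
  rw [show -(2 * β) = ((2 : ℕ) : ℝ) * -β by push_cast; ring, rpow_natCast_mul ha.le]
  exact rpow_le_rpow_of_nonpos (by positivity) (by nlinarith) (by linarith)

lemma integral_rpow_sq_add_sq_le (hβ : 1 / 2 < β) (ha : 0 < a) {m : ℝ} (hm : 0 ≤ m) :
    ∫ x in (0 : ℝ)..m, (x ^ 2 + a ^ 2) ^ (-β) ≤ (1 + 1 / (2 * β - 1)) * a ^ (1 - 2 * β) := by
  set f : ℝ → ℝ := fun x ↦ (x ^ 2 + a ^ 2) ^ (-β)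
  have hf : Continuous f :=
    (continuous_id.pow 2 |>.add continuous_const).rpow_const fun x ↦
      Or.inl (add_pos_of_nonneg_of_pos (sq_nonneg x) (pow_pos ha 2)).ne'
  set M := max m a
  have hnear : ∫ x in (0 : ℝ)..a, f x ≤ a ^ (1 - 2 * β) := by
    calc ∫ x in (0 : ℝ)..a, f x ≤ ∫ _ in (0 : ℝ)..a, a ^ (-(2 * β)) :=
          intervalIntegral.integral_mono_on ha.le (hf.intervalIntegrable _ _)
            intervalIntegrable_const fun x _ ↦ rpow_sq_add_sq_le_rpow_sq (by linarith) x ha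
      _ = a ^ (1 - 2 * β) := by
          rw [intervalIntegral.integral_const, smul_eq_mul, sub_zero, sub_eq_add_neg,
            rpow_add ha, rpow_one]
  have hfar : ∫ x in a..M, f x ≤ a ^ (1 - 2 * β) / (2 * β - 1) := by
    calc ∫ x in a..M, f x ≤ ∫ x in a..M, x ^ (-(2 * β)) := by
          refine intervalIntegral.integral_mono_on (le_max_right m a) (hf.intervalIntegrable _ _)
            ?_ fun x hx ↦ ?_
          · exact ContinuousOn.intervalIntegrable fun x hx ↦
              (continuousAt_rpow_const x _ (Or.inl (by
                rw [uIcc_of_le (le_max_right m a)] at hx; linarith [hx.1]))).continuousWithinAt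
          · have hx0 : 0 < x := ha.trans_le hx.1
            simpa only [f, add_comm (x ^ 2)] using rpow_sq_add_sq_le_rpow_sq (by linarith) a hx0
      _ ≤ a ^ (1 - 2 * β) / (2 * β - 1) := integral_rpow_neg_le (by linarith) ha (le_max_right m a)
  calc ∫ x in (0 : ℝ)..m, f x ≤ ∫ x in (0 : ℝ)..M, f x :=
        intervalIntegral.integral_mono_interval le_rfl hm (le_max_left m a)
          (Eventually.of_forall fun x ↦ by positivity) (hf.intervalIntegrable _ _)
    _ = (∫ x in (0 : ℝ)..a, f x) + ∫ x in a..M, f x :=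
        (intervalIntegral.integral_add_adjacent_intervals (hf.intervalIntegrable _ _)
          (hf.intervalIntegrable _ _)).symm
    _ ≤ (1 + 1 / (2 * β - 1)) * a ^ (1 - 2 * β) := by
        have := add_le_add hnear hfar
        rw [div_eq_mul_one_div] at this
        linarith

lemma sum_range_rpow_succ_sq_add_sq_le (hβ : 1 / 2 < β) (ha : 0 < a) (n : ℕ) :
    ∑ i ∈ Finset.range n, (((i : ℝ) + 1) ^ 2 + a ^ 2) ^ (-β)
      ≤ (1 + 1 / (2 * β - 1)) * a ^ (1 - 2 * β) := by
  have hanti : AntitoneOn (fun x : ℝ ↦ (x ^ 2 + a ^ 2) ^ (-β)) (Icc 0 (0 + n)) :=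
    fun x hx y _ hxy ↦ rpow_le_rpow_of_nonpos (by positivity) (by nlinarith [hx.1]) (by linarith)
  have := hanti.sum_le_integral
  simp only [zero_add, Nat.cast_add, Nat.cast_one] at this
  exact this.trans (integral_rpow_sq_add_sq_le hβ ha n.cast_nonneg)

lemma summable_rpow_sq_add_sq_int (hβ : 1 / 2 < β) (ha : 0 < a) :
    Summable fun n : ℤ ↦ ((n : ℝ) ^ 2 + a ^ 2) ^ (-β) := by
  have hsucc : Summable fun n : ℕ ↦ (((n : ℝ) + 1) ^ 2 + a ^ 2) ^ (-β) :=
    summable_of_sum_range_le (fun n ↦ by positivity) (sum_range_rpow_succ_sq_add_sq_le hβ ha)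
  have hnat : Summable fun n : ℕ ↦ (((n : ℤ) : ℝ) ^ 2 + a ^ 2) ^ (-β) := by
    rw [← summable_nat_add_iff 1]
    simpa using hsucc
  exact summable_int_iff_summable_nat_and_neg.2 ⟨hnat, by simpa using hnat⟩

lemma tsum_rpow_sq_add_sq_int_le (hβ : 1 / 2 < β) (ha : 1 ≤ a) :
    ∑' n : ℤ, ((n : ℝ) ^ 2 + a ^ 2) ^ (-β) ≤ (3 + 2 / (2 * β - 1)) * a ^ (1 - 2 * β) := by
  have ha0 : 0 < a := by linarith
  rw [tsum_int_eq_zero_add_two_mul_tsum_pnat (fun n ↦ by simp) (summable_rpow_sq_add_sq_int hβ ha0),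
    tsum_pnat_eq_tsum_succ (f := fun n : ℕ ↦ (((n : ℤ) : ℝ) ^ 2 + a ^ 2) ^ (-β))]
  have hzero : ((0 : ℝ) ^ 2 + a ^ 2) ^ (-β) ≤ a ^ (1 - 2 * β) :=
    (rpow_sq_add_sq_le_rpow_sq (β := β) (by linarith) 0 ha0).trans
      (rpow_le_rpow_of_exponent_le ha (by linarith))
  have htail : ∑' n : ℕ, (((n : ℝ) + 1) ^ 2 + a ^ 2) ^ (-β)
      ≤ (1 + 1 / (2 * β - 1)) * a ^ (1 - 2 * β) :=
    Real.tsum_le_of_sum_range_le (fun n ↦ by positivity) (sum_range_rpow_succ_sq_add_sq_le hβ ha0)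
  push_cast
  rw [nsmul_eq_mul, Nat.cast_ofNat]
  calc _ ≤ a ^ (1 - 2 * β) + 2 * ((1 + 1 / (2 * β - 1)) * a ^ (1 - 2 * β)) := by gcongr
    _ = (3 + 2 / (2 * β - 1)) * a ^ (1 - 2 * β) := by ring

lemma rpow_mul_sq_add_sq {t : ℝ} (ht : 0 < t) (x h : ℝ) :
    ((x * t) ^ 2 + h ^ 2) ^ (-β) = t ^ (-(2 * β)) * (x ^ 2 + (h / t) ^ 2) ^ (-β) := by
  rw [show (x * t) ^ 2 + h ^ 2 = t ^ 2 * (x ^ 2 + (h / t) ^ 2) by field_simp,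
    mul_rpow (by positivity) (by positivity), show -(2 * β) = ((2 : ℕ) : ℝ) * -β by push_cast; ring,
    rpow_natCast_mul ht.le]

lemma summable_rpow_mul_sq_add_sq_int (hβ : 1 / 2 < β) {t h : ℝ} (ht : 0 < t) (hh : 0 < h) :
    Summable fun n : ℤ ↦ (((n : ℝ) * t) ^ 2 + h ^ 2) ^ (-β) := by
  simpa only [rpow_mul_sq_add_sq ht] using
    (summable_rpow_sq_add_sq_int hβ (div_pos hh ht)).mul_left (t ^ (-(2 * β)))

lemma tsum_rpow_mul_sq_add_sq_int_le (hβ : 1 / 2 < β) {t h : ℝ} (ht : 0 < t) (hth : t ≤ h) :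
    ∑' n : ℤ, (((n : ℝ) * t) ^ 2 + h ^ 2) ^ (-β)
      ≤ (3 + 2 / (2 * β - 1)) * h ^ (1 - 2 * β) / t := by
  have hh : 0 < h := ht.trans_le hth
  simp only [rpow_mul_sq_add_sq ht, tsum_mul_left]
  calc t ^ (-(2 * β)) * ∑' n : ℤ, ((n : ℝ) ^ 2 + (h / t) ^ 2) ^ (-β)
      ≤ t ^ (-(2 * β)) * ((3 + 2 / (2 * β - 1)) * (h / t) ^ (1 - 2 * β)) := by
        gcongr
        exact tsum_rpow_sq_add_sq_int_le hβ ((one_le_div ht).2 hth)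
    _ = (3 + 2 / (2 * β - 1)) * h ^ (1 - 2 * β) * (t ^ (-(2 * β)) / t ^ (1 - 2 * β)) := by
        rw [div_rpow hh.le ht.le]; ring
    _ = (3 + 2 / (2 * β - 1)) * h ^ (1 - 2 * β) / t := by
        rw [← rpow_sub ht, show -(2 * β) - (1 - 2 * β) = -1 by ring, rpow_neg_one, ← div_eq_mul_inv]

end LatticeSums

noncomputable def interferenceTerm (w : ℝ → ℝ) (h α Δ : ℝ) (q : ℤ × ℤ) : ℝ :=
  if q.1 % 2 = q.2 % 2 ∧ q ≠ (0, 0) then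
    snorm Δ h q.1 q.2 ^ (-α) * w (θreg Δ h q.1 q.2)
  else 0

lemma ηreg_eq_mul_tsum_interferenceTerm (ws wg : ℝ → ℝ) (h α p σ2 Δ : ℝ) :
    ηreg ws wg h α p σ2 Δ
      = p / σ2 * ∑' q, interferenceTerm (fun θ ↦ ws θ * wg θ) h α Δ q :=
  rfl

section Geometry

variable {h α Δ : ℝ}

lemma sq_snorm (Δ h : ℝ) (i j : ℤ) :
    snorm Δ h i j ^ 2 = (i * Δ / 2) ^ 2 + 3 * (j * Δ / 2) ^ 2 + h ^ 2 :=
  sq_sqrt (by positivity)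

lemma le_snorm (Δ h : ℝ) (i j : ℤ) : h ≤ snorm Δ h i j :=
  le_sqrt_of_sq_le (by nlinarith [sq_nonneg ((i : ℝ) * Δ / 2), sq_nonneg ((j : ℝ) * Δ / 2)])

lemma θreg_mem_Icc (Δ h : ℝ) (i j : ℤ) : θreg Δ h i j ∈ Icc 0 π :=
  ⟨arccos_nonneg _, arccos_le_pi _⟩

lemma θreg_le_arccos_of_snorm_le (hh : 0 < h) {i j : ℤ} {r : ℝ} (hr : snorm Δ h i j ≤ r) :
    θreg Δ h i j ≤ arccos (h / r) :=
  arccos_le_arccos (div_le_div_of_nonneg_left hh.le (hh.trans_le (le_snorm Δ h i j)) hr)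

lemma rpow_neg_snorm_le (hh : 0 < h) (hα : 0 ≤ α) (Δ : ℝ) (i j : ℤ) :
    snorm Δ h i j ^ (-α)
      ≤ ((i * (Δ / 2)) ^ 2 + h ^ 2) ^ (-(α / 4)) * ((j * (Δ / 2)) ^ 2 + h ^ 2) ^ (-(α / 4)) := by
  have hs : 0 < snorm Δ h i j := hh.trans_le (le_snorm Δ h i j)
  have hprod : ((i * (Δ / 2)) ^ 2 + h ^ 2) * ((j * (Δ / 2)) ^ 2 + h ^ 2) ≤ snorm Δ h i j ^ 4 := by
    rw [show snorm Δ h i j ^ 4 = (snorm Δ h i j ^ 2) ^ 2 by ring, sq_snorm, mul_div_assoc,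
      mul_div_assoc]
    generalize (i : ℝ) * (Δ / 2) = x
    generalize (j : ℝ) * (Δ / 2) = y
    nlinarith [mul_nonneg (sq_nonneg x) (sq_nonneg y), mul_nonneg (sq_nonneg x) (sq_nonneg h),
      mul_nonneg (sq_nonneg y) (sq_nonneg h), pow_nonneg (sq_nonneg x) 2,
      pow_nonneg (sq_nonneg y) 2]
  rw [← mul_rpow (by positivity) (by positivity), show -α = ((4 : ℕ) : ℝ) * -(α / 4) by
    push_cast; ring, rpow_natCast_mul hs.le]
  exact rpow_le_rpow_of_nonpos (by positivity) hprod (by linarith)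

end Geometry

section Interference

variable {w : ℝ → ℝ} {h α Δ : ℝ}

lemma interferenceTerm_nonneg (hw : ∀ θ ∈ Icc 0 π, 0 ≤ w θ) (q : ℤ × ℤ) :
    0 ≤ interferenceTerm w h α Δ q := by
  unfold interferenceTerm
  split_ifs
  · exact mul_nonneg (rpow_nonneg (sqrt_nonneg _) _) (hw _ (θreg_mem_Icc Δ h _ _))
  · exact le_rfl

lemma interferenceTerm_le (hh : 0 < h) (hα : 0 ≤ α) (hw : ∀ θ ∈ Icc 0 π, w θ ≤ 1)
    (q : ℤ × ℤ) :
    interferenceTerm w h α Δ q ≤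
      ((q.1 * (Δ / 2)) ^ 2 + h ^ 2) ^ (-(α / 4)) * ((q.2 * (Δ / 2)) ^ 2 + h ^ 2) ^ (-(α / 4)) := by
  unfold interferenceTerm
  split_ifs
  · calc _ ≤ snorm Δ h q.1 q.2 ^ (-α) :=
          mul_le_of_le_one_right (rpow_nonneg (sqrt_nonneg _) _) (hw _ (θreg_mem_Icc Δ h _ _))
      _ ≤ _ := rpow_neg_snorm_le hh hα Δ q.1 q.2
  · positivity

lemma summable_interferenceTerm (hh : 0 < h) (hα : 2 < α) (hw : MapsTo w (Icc 0 π) (Icc 0 1))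
    (hΔ : 0 < Δ) : Summable (interferenceTerm w h α Δ) := by
  have hg := summable_rpow_mul_sq_add_sq_int (β := α / 4) (by linarith) (half_pos hΔ) hh
  exact .of_nonneg_of_le (interferenceTerm_nonneg fun θ hθ ↦ (hw hθ).1)
    (interferenceTerm_le hh (by linarith) fun θ hθ ↦ (hw hθ).2)
    (hg.mul_of_nonneg hg (fun _ ↦ by positivity) fun _ ↦ by positivity)

lemma sq_mul_tsum_interferenceTerm_le (hh : 0 < h) (hα : 2 < α)
    (hw : MapsTo w (Icc 0 π) (Icc 0 1)) (hΔ : 0 < Δ) (hΔh : Δ ≤ 2 * h) :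
    Δ ^ 2 * ∑' q, interferenceTerm w h α Δ q
      ≤ 4 * ((3 + 2 / (α / 2 - 1)) * h ^ (1 - α / 2)) ^ 2 := by
  set g : ℤ → ℝ := fun n ↦ ((n * (Δ / 2)) ^ 2 + h ^ 2) ^ (-(α / 4))
  have hg : Summable g := summable_rpow_mul_sq_add_sq_int (by linarith) (half_pos hΔ) hh
  have hg0 : 0 ≤ g := fun _ ↦ by positivity
  have hgg : Summable fun q : ℤ × ℤ ↦ g q.1 * g q.2 := hg.mul_of_nonneg hg hg0 hg0
  have hsum_g : ∑' n, g n ≤ (3 + 2 / (α / 2 - 1)) * h ^ (1 - α / 2) / (Δ / 2) := by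
    have := tsum_rpow_mul_sq_add_sq_int_le (β := α / 4) (h := h) (by linarith) (half_pos hΔ)
      (by linarith)
    rwa [show 2 * (α / 4) = α / 2 by ring] at this
  calc Δ ^ 2 * ∑' q, interferenceTerm w h α Δ q ≤ Δ ^ 2 * ∑' q : ℤ × ℤ, g q.1 * g q.2 :=
        mul_le_mul_of_nonneg_left ((summable_interferenceTerm hh hα hw hΔ).tsum_le_tsum
          (interferenceTerm_le hh (by linarith) fun θ hθ ↦ (hw hθ).2) hgg) (sq_nonneg Δ)
    _ = Δ ^ 2 * (∑' n, g n) ^ 2 := by rw [← hg.tsum_mul_tsum hg hgg, sq (∑' n, g n)]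
    _ ≤ Δ ^ 2 * ((3 + 2 / (α / 2 - 1)) * h ^ (1 - α / 2) / (Δ / 2)) ^ 2 := by gcongr
    _ = 4 * ((3 + 2 / (α / 2 - 1)) * h ^ (1 - α / 2)) ^ 2 := by
        field_simp
        ring

end Interference

section LowerBound

variable {w : ℝ → ℝ} {h α Δ : ℝ}

lemma interferenceTerm_ge (hh : 0 < h) (hα : 0 ≤ α) {r c : ℝ} (hc0 : 0 ≤ c)
    (hc : ∀ θ ∈ Icc 0 (arccos (h / r)), c ≤ w θ) {q : ℤ × ℤ}
    (hq : q.1 % 2 = q.2 % 2 ∧ q ≠ (0, 0)) (hr : snorm Δ h q.1 q.2 ≤ r) :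
    r ^ (-α) * c ≤ interferenceTerm w h α Δ q := by
  have hs : 0 < snorm Δ h q.1 q.2 := hh.trans_le (le_snorm Δ h _ _)
  rw [interferenceTerm, if_pos hq]
  exact mul_le_mul (rpow_le_rpow_of_nonpos hs hr (by linarith))
    (hc _ ⟨(θreg_mem_Icc Δ h _ _).1, θreg_le_arccos_of_snorm_le hh hr⟩) hc0
    (rpow_nonneg (sqrt_nonneg _) _)

lemma snorm_two_mul_le {ρ : ℝ} (hΔ : 0 ≤ Δ) {a b : ℕ} (ha : a * Δ ≤ ρ / 2)
    (hb : b * Δ ≤ ρ / 2) : snorm Δ h (2 * a) (2 * b) ≤ √(ρ ^ 2 + h ^ 2) := by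
  have ha2 := pow_le_pow_left₀ (mul_nonneg a.cast_nonneg hΔ) ha 2
  have hb2 := pow_le_pow_left₀ (mul_nonneg b.cast_nonneg hΔ) hb 2
  refine sqrt_le_sqrt ?_
  push_cast
  nlinarith

lemma le_sq_mul_tsum_interferenceTerm (hh : 0 < h) (hα : 0 ≤ α)
    (hw : ∀ θ ∈ Icc 0 π, 0 ≤ w θ) {ρ c : ℝ} (hc0 : 0 ≤ c)
    (hc : ∀ θ ∈ Icc 0 (arccos (h / √(ρ ^ 2 + h ^ 2))), c ≤ w θ) (hΔ : 0 < Δ)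
    (hΔρ : Δ ≤ ρ / 2) (hsum : Summable (interferenceTerm w h α Δ)) :
    ρ ^ 2 / 16 * (√(ρ ^ 2 + h ^ 2) ^ (-α) * c) ≤ Δ ^ 2 * ∑' q, interferenceTerm w h α Δ q := by
  set K := √(ρ ^ 2 + h ^ 2) ^ (-α) * c
  set N := ⌊ρ / (2 * Δ)⌋₊
  have hx : 1 ≤ ρ / (2 * Δ) := by rw [le_div_iff₀ (by positivity)]; linarith
  have hNρ : ρ / 4 ≤ N * Δ :=
    calc ρ / 4 = ρ / (2 * Δ) / 2 * Δ := by field_simp; ring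
      _ ≤ N * Δ := by gcongr; exact (Nat.div_two_lt_floor hx).le
  have hNΔ : N * Δ ≤ ρ / 2 :=
    calc N * Δ ≤ ρ / (2 * Δ) * Δ := by gcongr; exact Nat.floor_le (zero_le_one.trans hx)
      _ = ρ / 2 := by field_simp
  set e : ℕ × ℕ → ℤ × ℤ := fun ab ↦ (2 * ab.1, 2 * ab.2)
  have he : Function.Injective e := fun x y hxy ↦ by
    simp only [e, Prod.mk.injEq] at hxy
    ext <;> omega
  set S := Finset.Icc 1 N ×ˢ Finset.Icc 1 N
  have hterm : ∀ ab ∈ S, K ≤ interferenceTerm w h α Δ (e ab) := by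
    rintro ⟨a, b⟩ hab
    simp only [S, Finset.mem_product, Finset.mem_Icc] at hab
    refine interferenceTerm_ge hh hα hc0 hc ⟨by simp [e], by simp [e]; omega⟩
      (snorm_two_mul_le hΔ.le ?_ ?_)
    · exact (mul_le_mul_of_nonneg_right (by exact_mod_cast hab.1.2) hΔ.le).trans hNΔ
    · exact (mul_le_mul_of_nonneg_right (by exact_mod_cast hab.2.2) hΔ.le).trans hNΔ
  calc ρ ^ 2 / 16 * K ≤ Δ ^ 2 * (S.card • K) := by
        rw [nsmul_eq_mul, Finset.card_product, Nat.card_Icc, Nat.add_sub_cancel]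
        push_cast
        have hK : 0 ≤ K := by positivity
        nlinarith [mul_le_mul_of_nonneg_right (pow_le_pow_left₀ (by linarith) hNρ 2) hK]
    _ ≤ Δ ^ 2 * ∑ ab ∈ S, interferenceTerm w h α Δ (e ab) := by
        gcongr
        exact Finset.card_nsmul_le_sum _ _ _ hterm
    _ = Δ ^ 2 * ∑ q ∈ S.image e, interferenceTerm w h α Δ q := by
        rw [Finset.sum_image he.injOn]
    _ ≤ Δ ^ 2 * ∑' q, interferenceTerm w h α Δ q := by
        gcongr
        exact hsum.sum_le_tsum _ fun q _ ↦ interferenceTerm_nonneg hw q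

end LowerBound

/- `arccos (h / √(ρ ^ 2 + h ^ 2))` is the off-axis angle of a satellite at horizontal
distance `ρ` from the terminal. -/
lemma exists_radius_half_le_of_continuousOn {w : ℝ → ℝ} {h : ℝ} (hh : 0 < h)
    (hw : ContinuousOn w (Icc 0 π)) (hw0 : 0 < w 0) :
    ∃ ρ > 0, ∀ θ ∈ Icc 0 (arccos (h / √(ρ ^ 2 + h ^ 2))), w 0 / 2 ≤ w θ := by
  have hnear : ∀ᶠ θ in 𝓝[≥] 0, w 0 / 2 < w θ := by
    have := (hw 0 ⟨le_rfl, pi_pos.le⟩).eventually (lt_mem_nhds (half_lt_self hw0))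
    rwa [nhdsWithin_Icc_eq_nhdsGE pi_pos] at this
  obtain ⟨u, hu, hsub⟩ := mem_nhdsGE_iff_exists_Ico_subset.1 hnear
  have hangle : Tendsto (fun ρ ↦ arccos (h / √(ρ ^ 2 + h ^ 2))) (𝓝[>] 0) (𝓝 0) := by
    have : ContinuousAt (fun ρ ↦ arccos (h / √(ρ ^ 2 + h ^ 2))) 0 :=
      continuous_arccos.continuousAt.comp <| continuousAt_const.div (by fun_prop)
        (by simp [sqrt_sq hh.le, hh.ne'])
    simpa [sqrt_sq hh.le, hh.ne'] using this.tendsto.mono_left nhdsWithin_le_nhds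
  obtain ⟨ρ, hρu, hρ⟩ := ((hangle.eventually (gt_mem_nhds hu)).and self_mem_nhdsWithin).exists
  exact ⟨ρ, hρ, fun θ hθ ↦ (hsub ⟨hθ.1, hθ.2.trans_lt hρu⟩).le⟩

theorem liminf_sq_spacing_eta_pos_general
    (ws wg : ℝ → ℝ) (h α p σ2 : ℝ)
    (hh : 0 < h) (hα : 2 < α) (hp : 0 < p) (hσ : 0 < σ2)
    (hws_cont : ContinuousOn ws (Set.Icc (0 : ℝ) π))
    (hwg_cont : ContinuousOn wg (Set.Icc (0 : ℝ) π))
    (hws_mem : ∀ θ ∈ Set.Icc (0 : ℝ) π, ws θ ∈ Set.Icc (0 : ℝ) 1)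
    (hwg_mem : ∀ θ ∈ Set.Icc (0 : ℝ) π, wg θ ∈ Set.Icc (0 : ℝ) 1)
    (hpos : 0 < ws 0 * wg 0) :
    0 < Filter.liminf (fun Δ => Δ ^ 2 * ηreg ws wg h α p σ2 Δ)
        (nhdsWithin 0 (Set.Ioi 0)) := by
  set w := fun θ ↦ ws θ * wg θ
  have hw : MapsTo w (Icc 0 π) (Icc 0 1) := fun θ hθ ↦
    ⟨mul_nonneg (hws_mem θ hθ).1 (hwg_mem θ hθ).1,
      mul_le_one₀ (hws_mem θ hθ).2 (hwg_mem θ hθ).1 (hwg_mem θ hθ).2⟩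
  obtain ⟨ρ, hρ, hc⟩ := exists_radius_half_le_of_continuousOn hh (hws_cont.mul hwg_cont) hpos
  have hpσ : 0 < p / σ2 := div_pos hp hσ
  have hlower : ∀ᶠ Δ in 𝓝[>] 0, p / σ2 * (ρ ^ 2 / 16 * (√(ρ ^ 2 + h ^ 2) ^ (-α) * (w 0 / 2)))
      ≤ Δ ^ 2 * ηreg ws wg h α p σ2 Δ := by
    filter_upwards [Ioc_mem_nhdsGT (half_pos hρ)] with Δ hΔ
    rw [ηreg_eq_mul_tsum_interferenceTerm, mul_left_comm (Δ ^ 2)]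
    exact mul_le_mul_of_nonneg_left (le_sq_mul_tsum_interferenceTerm hh (by linarith)
      (fun θ hθ ↦ (hw hθ).1) (half_pos hpos).le hc hΔ.1 hΔ.2
      (summable_interferenceTerm hh hα hw hΔ.1)) hpσ.le
  have hupper : ∀ᶠ Δ in 𝓝[>] 0, Δ ^ 2 * ηreg ws wg h α p σ2 Δ
      ≤ p / σ2 * (4 * ((3 + 2 / (α / 2 - 1)) * h ^ (1 - α / 2)) ^ 2) := by
    filter_upwards [Ioc_mem_nhdsGT (by linarith : 0 < 2 * h)] with Δ hΔ
    rw [ηreg_eq_mul_tsum_interferenceTerm, mul_left_comm (Δ ^ 2)]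
    exact mul_le_mul_of_nonneg_left (sq_mul_tsum_interferenceTerm_le hh hα hw hΔ.1 hΔ.2) hpσ.le
  have hK : 0 < p / σ2 * (ρ ^ 2 / 16 * (√(ρ ^ 2 + h ^ 2) ^ (-α) * (w 0 / 2))) := by
    have := half_pos hpos
    positivity
  exact hK.trans_le (le_liminf_of_le (isBoundedUnder_of_eventually_le hupper).isCoboundedUnder_ge
    hlower)

/-- The aggregate interference scaled by the squared inter-satellite spacing stays
bounded away from zero in the high-density limit: `liminf_{Δ→0⁺} Δ²·η(Δ) > 0`. -/
theorem liminf_sq_spacing_eta_pos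
    (ws wg : ℝ → ℝ) (h α p σ2 : ℝ)
    (hh : 0 < h) (hα : 2 < α) (hp : 0 < p) (hσ : 0 < σ2)
    (hws_anti : AntitoneOn ws (Set.Icc (0 : ℝ) π))
    (hwg_anti : AntitoneOn wg (Set.Icc (0 : ℝ) π))
    (hws_cont : ContinuousOn ws (Set.Icc (0 : ℝ) π))
    (hwg_cont : ContinuousOn wg (Set.Icc (0 : ℝ) π))
    (hws_mem : ∀ θ ∈ Set.Icc (0 : ℝ) π, ws θ ∈ Set.Icc (0 : ℝ) 1)
    (hwg_mem : ∀ θ ∈ Set.Icc (0 : ℝ) π, wg θ ∈ Set.Icc (0 : ℝ) 1)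
    (hpos : 0 < ws 0 * wg 0) :
    0 < Filter.liminf (fun Δ => Δ ^ 2 * ηreg ws wg h α p σ2 Δ)
        (nhdsWithin 0 (Set.Ioi 0)) :=
  liminf_sq_spacing_eta_pos_general ws wg h α p σ2 hh hα hp hσ hws_cont hwg_cont hws_mem hwg_mem
    hpos
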